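/- The ℓ¹-covering radius of the lattice 𝓗₂ ⊕ 𝓗₂ ⊂ ℝ⁴ equals 1, where 𝓗₂ ⊂ ℝ² is the lattice generated by (1,0) and (1/2,1/2). -/

import Mathlib

/-
In the coordinates `u = x₀ + x₁`, `w = x₀ - x₁` the lattice `𝓗₂` becomes `ℤ²`, and
`|p| + |q| = max |p + q| |p - q|` turns the ℓ¹ norm on `ℝ²` into the ℓ∞ norm in these
coordinates. Hence every point of `ℝ²` is within ℓ¹-distance `1/2` of `𝓗₂` (round `u` and `w`),
while `(1/2, 0)`, whose `u` is a half-integer, is at distance at least `1/2` from all of `𝓗₂`.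
Adding the two blocks gives the bound `1` in `ℝ⁴`, attained at `(1/2, 0, 1/2, 0)`.
-/

def l1 {n : ℕ} (x : Fin n → ℝ) : ℝ := ∑ i, |x i|

/-- The lattice `𝓗₂ ⊕ 𝓗₂ ⊂ ℝ⁴`, where `𝓗₂` is generated by `(1,0)` and `(1/2,1/2)`. -/
def H2H2 : Set (Fin 4 → ℝ) :=
  {x | ∃ a b c d : ℤ, x = ![(a : ℝ) + (b : ℝ)/2, (b : ℝ)/2, (c : ℝ) + (d : ℝ)/2, (d : ℝ)/2]}

lemma abs_add_abs_le_max_abs_add_abs_sub (p q : ℝ) : |p| + |q| ≤ max |p + q| |p - q| := by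
  rcases abs_cases p with ⟨hp, -⟩ | ⟨hp, -⟩ <;> rcases abs_cases q with ⟨hq, -⟩ | ⟨hq, -⟩ <;>
    rw [hp, hq, le_max_iff]
  all_goals first
    | exact Or.inl (by linarith [le_abs_self (p + q), neg_abs_le (p + q)])
    | exact Or.inr (by linarith [le_abs_self (p - q), neg_abs_le (p - q)])

lemma half_le_abs_half_sub_intCast (n : ℤ) : (1 : ℝ) / 2 ≤ |1 / 2 - (n : ℝ)| := by
  rcases le_or_gt n 0 with h | h
  · have hn : (n : ℝ) ≤ 0 := by exact_mod_cast h
    rw [abs_of_nonneg (by linarith)]; linarith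
  · have hn : (1 : ℝ) ≤ n := by exact_mod_cast h
    rw [abs_of_nonpos (by linarith)]; linarith

lemma exists_H2_l1_dist_le_half (y₀ y₁ : ℝ) :
    ∃ a b : ℤ, |y₀ - ((a : ℝ) + (b : ℝ) / 2)| + |y₁ - (b : ℝ) / 2| ≤ 1 / 2 := by
  set a := round (y₀ - y₁)
  set m := round (y₀ + y₁)
  refine ⟨a, m - a, ?_⟩
  have hsum : (y₀ - ((a : ℝ) + ((m - a : ℤ) : ℝ) / 2)) + (y₁ - ((m - a : ℤ) : ℝ) / 2)
      = (y₀ + y₁) - m := by push_cast; ring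
  have hdiff : (y₀ - ((a : ℝ) + ((m - a : ℤ) : ℝ) / 2)) - (y₁ - ((m - a : ℤ) : ℝ) / 2)
      = (y₀ - y₁) - a := by push_cast; ring
  calc _ ≤ max |(y₀ + y₁) - m| |(y₀ - y₁) - a| := by
        rw [← hsum, ← hdiff]; exact abs_add_abs_le_max_abs_add_abs_sub _ _
    _ ≤ 1 / 2 := max_le (abs_sub_round _) (abs_sub_round _)

lemma half_le_H2_l1_dist_half_zero (a b : ℤ) :
    (1 : ℝ) / 2 ≤ |1 / 2 - ((a : ℝ) + (b : ℝ) / 2)| + |0 - (b : ℝ) / 2| :=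
  calc (1 : ℝ) / 2 ≤ |1 / 2 - ((a + b : ℤ) : ℝ)| := half_le_abs_half_sub_intCast _
    _ = |(1 / 2 - ((a : ℝ) + (b : ℝ) / 2)) + (0 - (b : ℝ) / 2)| := by push_cast; ring_nf
    _ ≤ _ := abs_add_le _ _

lemma l1_sub_H2H2_point (y : Fin 4 → ℝ) (a b c d : ℤ) :
    l1 (y - ![(a : ℝ) + (b : ℝ)/2, (b : ℝ)/2, (c : ℝ) + (d : ℝ)/2, (d : ℝ)/2])
      = (|y 0 - ((a : ℝ) + (b : ℝ) / 2)| + |y 1 - (b : ℝ) / 2|)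
        + (|y 2 - ((c : ℝ) + (d : ℝ) / 2)| + |y 3 - (d : ℝ) / 2|) := by
  simp only [l1, Fin.sum_univ_four, Pi.sub_apply, Matrix.cons_val_zero, Matrix.cons_val_one,
    Matrix.cons_val_two, Matrix.cons_val_three, Matrix.head_cons, Matrix.tail_cons]
  ring

lemma bddBelow_l1_sub_image {n : ℕ} (y : Fin n → ℝ) (S : Set (Fin n → ℝ)) :
    BddBelow ((fun v => l1 (y - v)) '' S) :=
  ⟨0, by rintro _ ⟨v, -, rfl⟩; exact Finset.sum_nonneg fun i _ => abs_nonneg _⟩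

lemma sInf_l1_dist_H2H2_le_one (y : Fin 4 → ℝ) :
    sInf ((fun v => l1 (y - v)) '' H2H2) ≤ 1 := by
  obtain ⟨a, b, hab⟩ := exists_H2_l1_dist_le_half (y 0) (y 1)
  obtain ⟨c, d, hcd⟩ := exists_H2_l1_dist_le_half (y 2) (y 3)
  calc _ ≤ l1 (y - ![(a : ℝ) + (b : ℝ)/2, (b : ℝ)/2, (c : ℝ) + (d : ℝ)/2, (d : ℝ)/2]) :=
        csInf_le (bddBelow_l1_sub_image y _)
          (Set.mem_image_of_mem _ (show _ ∈ H2H2 from ⟨a, b, c, d, rfl⟩))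
    _ ≤ 1 := by rw [l1_sub_H2H2_point]; linarith

lemma one_le_sInf_l1_dist_H2H2_deep_hole :
    1 ≤ sInf ((fun v => l1 ((![1/2, 0, 1/2, 0] : Fin 4 → ℝ) - v)) '' H2H2) := by
  refine le_csInf ⟨_, Set.mem_image_of_mem _ ⟨0, 0, 0, 0, rfl⟩⟩ ?_
  rintro _ ⟨_, ⟨a, b, c, d, rfl⟩, rfl⟩
  dsimp only
  rw [l1_sub_H2H2_point]
  have hab := half_le_H2_l1_dist_half_zero a b
  have hcd := half_le_H2_l1_dist_half_zero c d
  simp only [Matrix.cons_val_zero, Matrix.cons_val_one, Matrix.cons_val_two,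
    Matrix.cons_val_three, Matrix.head_cons, Matrix.tail_cons]
  linarith

theorem stmt10 :
    sSup (Set.range fun y : Fin 4 → ℝ => sInf ((fun v => l1 (y - v)) '' H2H2)) = 1 :=
  IsGreatest.csSup_eq
    ⟨⟨![1/2, 0, 1/2, 0], le_antisymm (sInf_l1_dist_H2H2_le_one _)
        one_le_sInf_l1_dist_H2H2_deep_hole⟩,
      Set.forall_mem_range.2 sInf_l1_dist_H2H2_le_one⟩
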